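/- arXiv:1409.8159 — 2 statements merged into one kernel-verified Lean document; each statement's English description precedes it below -/
import Mathlib

section
/- If the pursuer's travel-time metric d_V satisfies the triangle inequality and the pursuer has a speed advantage along every edge (d_V(j,c) < T(j,c) for every child c of j), then for any node j and any path P_k = (s_k^1, ..., s_k^{ℓ_k}) with evader arrival times T_k(i) at the i-th node, the maximum over i of [T_k(i) - d_V(j, s_k^i)] is attained at the last node i = ℓ_k, i.e., max_{i=1..ℓ_k} (T_k(i) - d_V(j, s_k^i)) = T_k(ℓ_k) - d_V(j, s_k^{ℓ_k}). -/
/-! Along the path, one edge step raises the evader's clock by more than the pursuer needs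
for that edge, so by the triangle inequality the slack `Tk i - d j (s i)` increases from each
node to the next; a monotone function on the path is largest at its last node. -/

open Finset

theorem Monotone.sup'_univ_eq_top {α β : Type*} [Fintype α] [Preorder α] [OrderTop α]
    [SemilatticeSup β] {f : α → β} (hf : Monotone f) (h : (univ : Finset α).Nonempty) :
    univ.sup' h f = f ⊤ :=
  le_antisymm (sup'_le _ _ fun _ _ => hf le_top) (le_sup' f (mem_univ ⊤))

theorem monotone_sub_dist_of_speed_advantage {V : Type*} (d : V → V → ℝ)
    (htri : ∀ a b c : V, d a c ≤ d a b + d b c)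
    {ℓ : ℕ} (s : Fin (ℓ + 1) → V) (Tk : Fin (ℓ + 1) → ℝ)
    (hadv : ∀ i : Fin ℓ, d (s i.castSucc) (s i.succ) < Tk i.succ - Tk i.castSucc) (j : V) :
    Monotone fun i => Tk i - d j (s i) := by
  refine Fin.monotone_iff_le_succ.mpr fun i => ?_
  have hstep := htri j (s i.castSucc) (s i.succ)
  linarith [hadv i]

/-- Under the triangle inequality for the pursuer travel times `d` and the
speed advantage along every edge of the path (`d (s i) (s (i+1)) < Tk (i+1) - Tk i`),
the maximum over the path nodes of `Tk i - d j (s i)` is attained at the last node. -/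
theorem stmt_0 {V : Type*} (d : V → V → ℝ)
    (htri : ∀ a b c : V, d a c ≤ d a b + d b c)
    (ℓ : ℕ) (s : Fin (ℓ + 1) → V) (Tk : Fin (ℓ + 1) → ℝ)
    (hadv : ∀ i : Fin ℓ, d (s i.castSucc) (s i.succ) < Tk i.succ - Tk i.castSucc)
    (j : V) :
    Finset.univ.sup' Finset.univ_nonempty (fun i : Fin (ℓ + 1) => Tk i - d j (s i))
      = Tk (Fin.last ℓ) - d j (s (Fin.last ℓ)) :=
  (monotone_sub_dist_of_speed_advantage d htri s Tk hadv j).sup'_univ_eq_top _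
end

section
/- Monotonicity of the guaranteed-capture value in pursuer speed: let d_V and d_V' be two pursuer travel-time functions with d_V'(i,j) ≤ d_V(i,j) for all i,j (a uniformly faster pursuer), both satisfying the triangle inequality and speed advantage. Then the recursively defined values satisfy D'(j | I) ≥ D(j | I) for every node j and every nonempty realizable uncertainty set I, provided the restricted control sets satisfy B(I) ⊆ B'(I). -/
/-- monotonicity of the value in pursuer speed: `d'` is a uniformly
faster travel-time function (`d' ≤ d`).  `D` and `D'` are defined by the ordered
recursion (base case at singletons; max–min recursion with attained maximizer for `D`
over `B I`, and `D'` at least the value of every control in `B' I`), where the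
red/green updates are nonempty strict subsets (well-foundedness) and `B I ⊆ B' I`.
Then `D'(j|I) ≥ D(j|I)` for every node `j` and every nonempty uncertainty set `I`. -/
theorem stmt_14 {V : Type*} (d d' : V → V → ℝ)
    (hfaster : ∀ i j : V, d' i j ≤ d i j)
    (len : ℕ → ℝ) (g : ℕ → V)
    (red green : Finset ℕ → V → Finset ℕ)
    (hupd : ∀ (I : Finset ℕ) (u : V), 2 ≤ I.card →
      (red I u).Nonempty ∧ red I u ⊂ I ∧ (green I u).Nonempty ∧ green I u ⊂ I)
    (B B' : Finset ℕ → Set V) (hB : ∀ I : Finset ℕ, B I ⊆ B' I)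
    (D D' : V → Finset ℕ → ℝ)
    (hbase : ∀ (j : V) (k : ℕ), D j {k} = len k - d j (g k))
    (hbase' : ∀ (j : V) (k : ℕ), D' j {k} = len k - d' j (g k))
    (hrec : ∀ (j : V) (I : Finset ℕ), 2 ≤ I.card →
      ∃ u ∈ B I, D j I = min (D u (red I u)) (D u (green I u)) - d j u)
    (hrec' : ∀ (j : V) (I : Finset ℕ), 2 ≤ I.card → ∀ u ∈ B' I,
      min (D' u (red I u)) (D' u (green I u)) - d' j u ≤ D' j I) :
    ∀ (j : V) (I : Finset ℕ), I.Nonempty → D j I ≤ D' j I := by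
  intro j I hI
  induction I using Finset.strongInduction generalizing j with
  | H I ih =>
    obtain ⟨k, rfl⟩ | hI₂ := hI.exists_eq_singleton_or_nontrivial
    · rw [hbase, hbase']
      exact sub_le_sub_left (hfaster j (g k)) _
    · have hcard : 2 ≤ I.card := Finset.one_lt_card_iff_nontrivial.mpr hI₂
      obtain ⟨u, huB, hDj⟩ := hrec j I hcard
      obtain ⟨hred, hred_sub, hgreen, hgreen_sub⟩ := hupd I u hcard
      calc D j I = min (D u (red I u)) (D u (green I u)) - d j u := hDj
        _ ≤ min (D' u (red I u)) (D' u (green I u)) - d' j u :=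
          sub_le_sub (min_le_min (ih _ hred_sub u hred) (ih _ hgreen_sub u hgreen))
            (hfaster j u)
        _ ≤ D' j I := hrec' j I hcard u (hB I huB)
end
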